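/- Let X be a subshift over a finite alphabet A, let 𝒲 ⊆ L(X) be a set of words such that every finite word v ∈ L(X) is a suffix of some w ∈ 𝒲, let c be a letter not in A, and let Y be the coded subshift over the alphabet A ∪ {c} with code words {wc : w ∈ 𝒲}. Then for any words u and v over A ∪ {c} such that the concatenation ucv lies in L(Y), one has F_Y(ucv) = F_Y(cv). -/

import Mathlib

/-- The finite word `w` occurs in the biinfinite sequence `x` starting at position `i`. -/
def WordAt {A : Type*} (x : ℤ → A) (i : ℤ) (w : List A) : Prop :=
  ∀ k : ℕ, (hk : k < w.length) → x (i + k) = w.get ⟨k, hk⟩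

/-- A subshift: a closed, shift-invariant subset of `A^ℤ` (with the product topology,
`A` carrying the discrete topology). -/
def IsSubshift {A : Type*} [TopologicalSpace A] (X : Set (ℤ → A)) : Prop :=
  IsClosed X ∧ (fun x : ℤ → A => fun i => x (i + 1)) '' X = X

/-- `w` belongs to the language of `X`: `w` occurs in some point of `X`. -/
def InLang {A : Type*} (X : Set (ℤ → A)) (w : List A) : Prop :=
  ∃ x ∈ X, ∃ i : ℤ, WordAt x i w

/-- The follower set of the word `w` in `X`: all right-infinite sequences `s`
such that `ws` occurs in some point of `X`. -/
def Follower {A : Type*} (X : Set (ℤ → A)) (w : List A) : Set (ℕ → A) :=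
  {s | ∃ x ∈ X, ∃ i : ℤ, WordAt x i w ∧ ∀ k : ℕ, x (i + w.length + k) = s k}

/-- `F_X(n)`: the collection of follower sets of words of length `n` in `X`. -/
def FollowerSets {A : Type*} (X : Set (ℤ → A)) (n : ℕ) : Set (Set (ℕ → A)) :=
  {F | ∃ w : List A, w.length = n ∧ InLang X w ∧ Follower X w = F}

/-- A subshift is sofic iff it has only finitely many follower sets. -/
def Sofic {A : Type*} (X : Set (ℤ → A)) : Prop :=
  {F | ∃ w : List A, InLang X w ∧ Follower X w = F}.Finite

/-- The discrete topology on `Option A`. -/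
instance optionTopologicalSpace {A : Type*} : TopologicalSpace (Option A) := ⊥

instance optionDiscreteTopology {A : Type*} : DiscreteTopology (Option A) := ⟨rfl⟩

/-- `x` is a biinfinite concatenation of words from `W`. -/
def ConcatPoint {B : Type*} (W : Set (List B)) (x : ℤ → B) : Prop :=
  ∃ f : ℤ → ℤ, StrictMono f ∧ (∀ i : ℤ, ∃ n : ℤ, f n ≤ i ∧ i < f (n + 1)) ∧
    ∀ n : ℤ, ∃ w ∈ W, (w.length : ℤ) = f (n + 1) - f n ∧ WordAt x (f n) w

/-- `Y` is the coded subshift with code words `W`: the smallest subshift containing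
all biinfinite concatenations of words of `W`. -/
def IsCodedSubshift {B : Type*} [TopologicalSpace B] (W : Set (List B)) (Y : Set (ℤ → B)) : Prop :=
  IsSubshift Y ∧ {x | ConcatPoint W x} ⊆ Y ∧
    ∀ Z : Set (ℤ → B), IsSubshift Z → {x | ConcatPoint W x} ⊆ Z → Y ⊆ Z

section Aux
variable {B : Type*} [TopologicalSpace B] [DiscreteTopology B]

lemma mem_closure_iff_finset {C : Set (ℤ → B)} {x : ℤ → B} :
    x ∈ closure C ↔ ∀ I : Finset ℤ, ∃ y ∈ C, ∀ i ∈ I, y i = x i := by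
  constructor
  · intro hx I
    have hopen : IsOpen {y : ℤ → B | ∀ i ∈ I, y i = x i} := by
      have he : {y : ℤ → B | ∀ i ∈ I, y i = x i}
          = Set.pi (I : Set ℤ) (fun i => {x i}) := by
        ext y; simp [Set.mem_pi]
      rw [he]
      exact isOpen_set_pi I.finite_toSet (fun i _ => isOpen_discrete _)
    obtain ⟨y, hy1, hy2⟩ := mem_closure_iff.mp hx _ hopen (fun i _ => rfl)
    exact ⟨y, hy2, hy1⟩
  · intro h
    rw [mem_closure_iff_nhds]
    intro U hU
    rw [nhds_pi] at hU
    obtain ⟨I, hIfin, V, hV, hsub⟩ := Filter.mem_pi.mp hU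
    obtain ⟨y, hyC, hy⟩ := h hIfin.toFinset
    refine ⟨y, hsub fun i hi => ?_, hyC⟩
    have := hy i (hIfin.mem_toFinset.mpr hi)
    rw [this]
    have : V i ∈ nhds (x i) := hV i
    rw [nhds_discrete] at this
    exact this

lemma ConcatPoint.shift {W : Set (List B)} {x : ℤ → B} (h : ConcatPoint W x) (c : ℤ) :
    ConcatPoint W (fun i => x (i + c)) := by
  obtain ⟨f, hf1, hf2, hf3⟩ := h
  refine ⟨fun n => f n - c, fun a b hab => ?_, fun i => ?_, fun n => ?_⟩
  · show f a - c < f b - c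
    have := hf1 hab; omega
  · obtain ⟨n, h1, h2⟩ := hf2 (i + c)
    exact ⟨n, show f n - c ≤ i by omega, show i < f (n + 1) - c by omega⟩
  · obtain ⟨w, hw, hlen, hword⟩ := hf3 n
    refine ⟨w, hw, show (w.length : ℤ) = (f (n+1) - c) - (f n - c) by omega, fun k hk => ?_⟩
    have := hword k hk
    show x (f n - c + ↑k + c) = _
    rw [show f n - c + ↑k + c = f n + ↑k by omega]
    exact this

def shiftHomeo : (ℤ → B) ≃ₜ (ℤ → B) where
  toFun x i := x (i + 1)
  invFun x i := x (i - 1)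
  left_inv x := funext fun i => by show x (i - 1 + 1) = x i; rw [show i - 1 + 1 = i by omega]
  right_inv x := funext fun i => by show x (i + 1 - 1) = x i; rw [show i + 1 - 1 = i by omega]
  continuous_toFun := continuous_pi fun i => continuous_apply (i + 1)
  continuous_invFun := continuous_pi fun i => continuous_apply (i - 1)

lemma concat_shift_image (W : Set (List B)) :
    (fun x : ℤ → B => fun i => x (i + 1)) '' {x | ConcatPoint W x} = {x | ConcatPoint W x} := by
  apply Set.Subset.antisymm
  · rintro _ ⟨x, hx, rfl⟩
    exact hx.shift 1
  · intro x hx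
    refine ⟨fun i => x (i + (-1)), hx.shift (-1), ?_⟩
    funext i
    show x (i + 1 + -1) = x i
    rw [show i + 1 + -1 = i by omega]

lemma closure_concat_isSubshift (W : Set (List B)) :
    IsSubshift (closure {x | ConcatPoint W x}) := by
  refine ⟨isClosed_closure, ?_⟩
  have h1 : (fun x : ℤ → B => fun i => x (i + 1)) = ⇑(shiftHomeo (B := B)) := rfl
  rw [h1, shiftHomeo.image_closure, ← h1, concat_shift_image]

end Aux

section Glue
variable {A : Type*}

/-- In a concatenation point of the coded words, every `none` is the last letter of a block. -/
lemma exists_block_end {W : Set (List A)} {x : ℤ → Option A}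
    {f : ℤ → ℤ} (hf1 : StrictMono f)
    (hf3 : ∀ n : ℤ, ∃ w ∈ (fun w : List A => w.map some ++ [none]) '' W,
      (w.length : ℤ) = f (n + 1) - f n ∧ WordAt x (f n) w)
    {p : ℤ} {n : ℤ} (h1 : f n ≤ p) (h2 : p < f (n + 1)) (hp : x p = none) :
    p = f (n + 1) - 1 := by
  obtain ⟨w', ⟨w, hw, rfl⟩, hlen, hword⟩ := hf3 n
  have hlen' : (w.length : ℤ) + 1 = f (n + 1) - f n := by
    simpa using hlen
  set k : ℕ := (p - f n).toNat with hkdef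
  have hk : (k : ℤ) = p - f n := Int.toNat_of_nonneg (by omega)
  have hklt : k < (w.map some ++ [none]).length := by
    simp only [List.length_append, List.length_map, List.length_cons, List.length_nil]
    omega
  have hval := hword k hklt
  rw [show f n + (k : ℤ) = p by omega, hp] at hval
  by_contra hne
  have hkl : k < w.length := by omega
  rw [List.get_eq_getElem, List.getElem_append_left (by simpa using hkl),
    List.getElem_map] at hval
  exact Option.some_ne_none _ hval.symm

/-- Gluing two concatenation points at `none` positions. -/
lemma glue_concat {W : Set (List A)} {x y : ℤ → Option A} {p q : ℤ}
    (hx : ConcatPoint ((fun w : List A => w.map some ++ [none]) '' W) x)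
    (hy : ConcatPoint ((fun w : List A => w.map some ++ [none]) '' W) y)
    (hxp : x p = none) (hyq : y q = none) :
    ConcatPoint ((fun w : List A => w.map some ++ [none]) '' W)
      (fun k => if k ≤ p then x k else y (q + (k - p))) := by
  obtain ⟨f, hf1, hf2, hf3⟩ := hx
  obtain ⟨g, hg1, hg2, hg3⟩ := hy
  obtain ⟨m, hm1, hm2⟩ := hf2 p
  have hpm : p = f (m + 1) - 1 := exists_block_end hf1 hf3 hm1 hm2 hxp
  obtain ⟨l, hl1, hl2⟩ := hg2 q
  have hql : q = g (l + 1) - 1 := exists_block_end hg1 hg3 hl1 hl2 hyq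
  set h : ℤ → ℤ := fun n => if n ≤ m + 1 then f n else g (n - m + l) + (p - q) with hdef
  have hA : ∀ n ≤ m + 1, h n = f n := fun n hn => if_pos hn
  have hB : ∀ n, m + 1 ≤ n → h n = g (n - m + l) + (p - q) := by
    intro n hn
    rcases eq_or_lt_of_le hn with h1 | h1
    · rw [← h1, hA _ le_rfl, show m + 1 - m + l = l + 1 by ring]
      omega
    · exact if_neg (by omega)
  have hgstep : ∀ a b : ℤ, a < b → g a < g b := fun a b hab => hg1 hab
  refine ⟨h, ?_, ?_, ?_⟩
  · intro a b hab
    by_cases hb : b ≤ m + 1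
    · rw [hA a (by omega), hA b hb]; exact hf1 hab
    · push_neg at hb
      rw [hB b (by omega)]
      by_cases ha : a ≤ m + 1
      · rw [hA a ha]
        have h1 : f a ≤ f (m + 1) := hf1.monotone ha
        have h2 : g (l + 1) < g (b - m + l) := hgstep _ _ (by omega)
        omega
      · push_neg at ha
        rw [hB a (by omega)]
        have := hgstep (a - m + l) (b - m + l) (by omega)
        omega
  · intro i
    by_cases hi : i ≤ p
    · obtain ⟨n, h1, h2⟩ := hf2 i
      have hnm : n < m + 1 := by
        have : f n < f (m + 1) := by omega
        exact hf1.lt_iff_lt.mp this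
      refine ⟨n, ?_, ?_⟩
      · rw [hA n (by omega)]; exact h1
      · rw [hA (n + 1) (by omega)]; exact h2
    · push_neg at hi
      obtain ⟨n, h1, h2⟩ := hg2 (q + (i - p))
      have hnl : l + 1 < n + 1 := by
        have : g (l + 1) < g (n + 1) := by omega
        exact hg1.lt_iff_lt.mp this
      refine ⟨n - l + m, ?_, ?_⟩
      · rw [hB (n - l + m) (by omega), show n - l + m - m + l = n by ring]; omega
      · rw [hB (n - l + m + 1) (by omega), show n - l + m + 1 - m + l = n + 1 by ring]; omega
  · intro n
    by_cases hn : n ≤ m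
    · obtain ⟨w, hw, hlen, hword⟩ := hf3 n
      refine ⟨w, hw, ?_, fun k hk => ?_⟩
      · rw [hA n (by omega), hA (n + 1) (by omega)]; exact hlen
      · rw [hA n (by omega)]
        have hpos : f n + (k : ℤ) ≤ p := by
          have : f (n + 1) ≤ f (m + 1) := hf1.monotone (by omega)
          omega
        show (if f n + (k : ℤ) ≤ p then x (f n + k) else _) = _
        rw [if_pos hpos]
        exact hword k hk
    · push_neg at hn
      set n₂ : ℤ := n - m + l with hn₂
      obtain ⟨w, hw, hlen, hword⟩ := hg3 n₂
      have hgn₂ : g (l + 1) ≤ g n₂ := hg1.monotone (by omega)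
      refine ⟨w, hw, ?_, fun k hk => ?_⟩
      · rw [hB n (by omega), hB (n + 1) (by omega),
          show n + 1 - m + l = n₂ + 1 by omega, show n - m + l = n₂ from hn₂.symm]
        omega
      · rw [hB n (by omega)]
        have hpos : ¬ (g n₂ + (p - q) + (k : ℤ) ≤ p) := by omega
        show (if g n₂ + (p - q) + (k : ℤ) ≤ p then _ else y (q + (g n₂ + (p - q) + (k : ℤ) - p))) = _
        rw [if_neg hpos, show q + (g n₂ + (p - q) + (k : ℤ) - p) = g n₂ + k by ring]
        exact hword k hk
end Glue

lemma get_append_add {B : Type*} (u w : List B) (k : ℕ) (hk : k < w.length)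
    (h : u.length + k < (u ++ w).length) :
    (u ++ w).get ⟨u.length + k, h⟩ = w.get ⟨k, hk⟩ := by
  rw [List.get_eq_getElem, List.get_eq_getElem,
    List.getElem_append_right (Nat.le_add_right _ _)]
  simp

lemma follower_append_subset {B : Type*} (Y : Set (ℤ → B)) (u w : List B) :
    Follower Y (u ++ w) ⊆ Follower Y w := by
  rintro s ⟨x, hx, i, hword, htail⟩
  refine ⟨x, hx, i + u.length, fun k hk => ?_, fun k => ?_⟩
  · have hk' : u.length + k < (u ++ w).length := by simp; omega
    have h1 := hword (u.length + k) hk'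
    rw [get_append_add u w k hk hk'] at h1
    rw [show i + (u.length : ℤ) + (k : ℤ) = i + ((u.length + k : ℕ) : ℤ) by push_cast; ring]
    exact h1
  · have h1 := htail k
    rw [show i + (u.length : ℤ) + (w.length : ℤ) + (k : ℤ)
        = i + (((u ++ w).length : ℕ) : ℤ) + (k : ℤ) by simp; push_cast; ring]
    exact h1

/-- For the coded subshift `Y` built from `X`, `W` and a new letter `c = none`:
for any words `u`, `v` with `ucv ∈ L(Y)`, `F_Y(ucv) = F_Y(cv)`. -/
theorem coded_follower_after_c {A : Type*} [Fintype A] [TopologicalSpace A]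
    [DiscreteTopology A] (X : Set (ℤ → A)) (hX : IsSubshift X)
    (W : Set (List A)) (hWL : ∀ w ∈ W, InLang X w)
    (hsuf : ∀ v : List A, InLang X v → ∃ w ∈ W, v <:+ w)
    (Y : Set (ℤ → Option A))
    (hY : IsCodedSubshift ((fun w : List A => w.map some ++ [none]) '' W) Y) :
    ∀ u v : List (Option A), InLang Y (u ++ none :: v) →
      Follower Y (u ++ none :: v) = Follower Y (none :: v) := by
  intro u v huv
  obtain ⟨⟨hYclosed, hYshift⟩, hCY, hmin⟩ := hY
  set W' : Set (List (Option A)) := (fun w : List A => w.map some ++ [none]) '' W with hW'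
  set C : Set (ℤ → Option A) := {x | ConcatPoint W' x} with hC
  have hYsub : Y ⊆ closure C := hmin _ (closure_concat_isSubshift W') subset_closure
  have hclY : closure C ⊆ Y := closure_minimal hCY hYclosed
  apply Set.Subset.antisymm (follower_append_subset Y u (none :: v))
  rintro s ⟨y, hyY, j, hyw, hys⟩
  obtain ⟨y₀, hy₀Y, i₀, hword₀⟩ := huv
  set L : ℕ := (u ++ none :: v).length with hL
  obtain ⟨x, hxC, hxag⟩ := mem_closure_iff_finset.mp (hYsub hy₀Y)
    ((Finset.range L).image (fun k : ℕ => i₀ + (k : ℤ)))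
  have hxword : WordAt x i₀ (u ++ none :: v) := by
    intro k hk
    rw [hxag (i₀ + k) (Finset.mem_image.mpr ⟨k, Finset.mem_range.mpr hk, rfl⟩)]
    exact hword₀ k hk
  set p : ℤ := i₀ + u.length with hp
  have hxp : x p = none := by
    have hk : u.length < (u ++ none :: v).length := by simp
    have h1 := hxword u.length hk
    rw [List.get_eq_getElem, List.getElem_append_right (le_refl u.length)] at h1
    simpa using h1
  have hyj : y j = none := by
    have h1 := hyw 0 (by simp)
    simpa using h1
  set z : ℤ → Option A := fun k => if k ≤ p then x k else y (j + (k - p)) with hzdef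
  have hzY : z ∈ Y := by
    apply hclY
    rw [mem_closure_iff_finset]
    intro I
    obtain ⟨y', hy'C, hy'ag⟩ := mem_closure_iff_finset.mp (hYsub hyY)
      (insert j (I.image (fun k => j + (k - p))))
    have hy'j : y' j = none := by
      rw [hy'ag j (Finset.mem_insert_self _ _)]; exact hyj
    refine ⟨fun k => if k ≤ p then x k else y' (j + (k - p)),
      glue_concat hxC hy'C hxp hy'j, fun k hk => ?_⟩
    show (if k ≤ p then x k else y' (j + (k - p)))
        = (if k ≤ p then x k else y (j + (k - p)))
    by_cases hkp : k ≤ p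
    · rw [if_pos hkp, if_pos hkp]
    · rw [if_neg hkp, if_neg hkp]
      exact hy'ag _ (Finset.mem_insert_of_mem (Finset.mem_image.mpr ⟨k, hk, rfl⟩))
  refine ⟨z, hzY, i₀, fun k hk => ?_, fun k => ?_⟩
  · by_cases hku : k ≤ u.length
    · have hpos : i₀ + (k : ℤ) ≤ p := by
        have : (k : ℤ) ≤ (u.length : ℤ) := by exact_mod_cast hku
        omega
      show (if i₀ + (k : ℤ) ≤ p then x (i₀ + k) else _) = _
      rw [if_pos hpos]
      exact hxword k hk
    · push_neg at hku
      set m : ℕ := k - u.length with hm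
      have hkm : k = u.length + m := by omega
      have hmlt : m < (none :: v).length := by
        have h3 : k < L := hk
        rw [hL] at h3
        simp only [List.length_append, List.length_cons] at h3
        simp only [List.length_cons]
        omega
      have hpos : ¬ (i₀ + (k : ℤ) ≤ p) := by
        have : (u.length : ℤ) < (k : ℤ) := by exact_mod_cast hku
        omega
      show (if i₀ + (k : ℤ) ≤ p then _ else y (j + (i₀ + (k : ℤ) - p))) = _
      rw [if_neg hpos, show j + (i₀ + (k : ℤ) - p) = j + (m : ℤ) by
        rw [hp]; omega]
      have h1 := hyw m hmlt
      have h2 : (u ++ none :: v).get ⟨k, hk⟩ = (none :: v).get ⟨m, hmlt⟩ := by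
        have hk2 : u.length + m < (u ++ none :: v).length := hkm ▸ hk
        have : (⟨k, hk⟩ : Fin (u ++ none :: v).length) = ⟨u.length + m, hk2⟩ :=
          Fin.ext hkm
        rw [this]
        exact get_append_add u (none :: v) m hmlt hk2
      rw [h2]
      exact h1
  · have hLlen : ((u ++ none :: v).length : ℤ) = (u.length : ℤ) + (v.length : ℤ) + 1 := by
      simp only [List.length_append, List.length_cons]; push_cast; ring
    have hpos : ¬ (i₀ + ((u ++ none :: v).length : ℤ) + (k : ℤ) ≤ p) := by omega
    show (if i₀ + ((u ++ none :: v).length : ℤ) + (k : ℤ) ≤ p then _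
        else y (j + (i₀ + ((u ++ none :: v).length : ℤ) + (k : ℤ) - p))) = _
    rw [if_neg hpos, show j + (i₀ + ((u ++ none :: v).length : ℤ) + (k : ℤ) - p)
        = j + ((none :: v).length : ℤ) + (k : ℤ) by
      simp only [List.length_cons]; rw [hp]; push_cast; omega]
    exact hys k
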